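/- Let the coordinates X_{ij} be i.i.d. Bernoulli(p) random variables for some p ∈ (0,1). Then for all integers k ≥ 1 and n ≥ 1, the probability that the first vector is a weak maximum is given exactly by q_{k,n}^{(p)} = Σ_{i=0}^{k} C(k,i) p^i (1−p)^{k−i} (1 − p^i + p^i (1−p)^{k−i})^{n−1}. -/

import Mathlib

open MeasureTheory ProbabilityTheory Filter

/-- `X i` is a weak maximum, with respect to the coordinatewise product order, among
the sample `X 0, …, X (n-1)` of vectors of dimension `k`: no other vector of the sample
strictly dominates it (dominates weakly in all coordinates and strictly in at least one). -/
def IsWeakParetoMax {Ω : Type*} (X : ℕ → ℕ → Ω → ℝ) (k n i : ℕ) (ω : Ω) : Prop :=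
  ∀ j < n, j ≠ i →
    ¬ ((∀ m < k, X i m ω ≤ X j m ω) ∧ (∃ m < k, X i m ω < X j m ω))

/-!
Encode a row by the finset of coordinates `m < k` at which it equals `1`. For `0/1` vectors,
strict domination is strict inclusion of these finsets, so row `0` is a weak maximum iff no other
row's finset strictly contains the finset `s` of row `0`. The rows are independent, so the event
{row `0` has finset `s`, and is a weak maximum} has probability `P(row = s) · P(¬ s ⊂ row)^(n-1)`,
where `P(¬ s ⊂ row) = 1 - P(s ⊆ row) + P(row = s) = 1 - p^|s| + p^|s| (1-p)^(k-|s|)`.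
Summing over `s` and grouping by `|s|` gives the binomial sum.
-/

open Measure in
lemma ProbabilityTheory.iIndepFun.curry {Ω ι κ β : Type*} [MeasurableSpace Ω] [MeasurableSpace β]
    {P : Measure Ω} {X : ι → κ → Ω → β} (mX : ∀ i j, Measurable (X i j))
    (h : iIndepFun (fun q : ι × κ ↦ X q.1 q.2) P) :
    iIndepFun (fun i ω j ↦ X i j ω) P := by
  have := h.isProbabilityMeasure
  have _ (i : ι) (j : κ) := isProbabilityMeasure_map (μ := P) (mX i j).aemeasurable
  have hrow (i : ι) : iIndepFun (X i) P := h.precomp (g := Prod.mk i) (Prod.mk_right_injective i)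
  rw [iIndepFun_iff_map_fun_eq_infinitePi_map (by fun_prop)]
  calc P.map (fun ω i j ↦ X i j ω)
      = (P.map fun ω (q : ι × κ) ↦ X q.1 q.2 ω).map (MeasurableEquiv.curry ι κ β) := by
        rw [map_map (by fun_prop) (by fun_prop)]; rfl
    _ = infinitePi fun i ↦ infinitePi fun j ↦ P.map (X i j) := by
        rw [h.map_fun_eq_infinitePi_map (fun q : ι × κ ↦ mX q.1 q.2)]
        exact infinitePi_map_curry fun i j ↦ P.map (X i j)
    _ = infinitePi fun i ↦ P.map fun ω j ↦ X i j ω := by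
        simp_rw [(hrow _).map_fun_eq_infinitePi_map (mX _)]

lemma measureReal_eq_sum_preimage_singleton_inter {α β : Type*} [MeasurableSpace α]
    {μ : Measure α} [IsFiniteMeasure μ] {f : α → β} (T : Finset β)
    (hf : ∀ b ∈ T, MeasurableSet (f ⁻¹' {b})) (hT : ∀ a, f a ∈ T) (E : Set α) :
    μ.real E = ∑ b ∈ T, μ.real (f ⁻¹' {b} ∩ E) := by
  have hcover : f ⁻¹' T = Set.univ := Set.eq_univ_of_forall hT
  rw [← Finset.sum_congr rfl fun b hb ↦ measureReal_restrict_apply (hf b hb),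
    sum_measureReal_preimage_singleton T hf, hcover, measureReal_restrict_apply_univ]

open Finset

lemma prod_ite_mem_range {M : Type*} [CommMonoid M] {k : ℕ} {t : Finset ℕ} (ht : t ⊆ range k)
    (a b : M) : ∏ m ∈ range k, (if m ∈ t then a else b) = a ^ #t * b ^ (k - #t) := by
  rw [prod_ite, filter_mem_eq_inter, filter_notMem_eq_sdiff, inter_eq_right.mpr ht, prod_const,
    prod_const, card_sdiff_of_subset ht, card_range]

noncomputable def onesBelow (k : ℕ) (x : ℕ → ℝ) : Finset ℕ := {m ∈ range k | x m = 1}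

lemma measurable_onesBelow (k : ℕ) : Measurable (onesBelow k) := by
  refine measurable_finset_iff.mpr fun m ↦ ?_
  simp only [onesBelow, mem_filter]
  fun_prop

lemma onesBelow_ssubset_iff {k : ℕ} {x y : ℕ → ℝ} (hx : ∀ m, x m = 0 ∨ x m = 1)
    (hy : ∀ m, y m = 0 ∨ y m = 1) :
    onesBelow k x ⊂ onesBelow k y ↔ (∀ m < k, x m ≤ y m) ∧ ∃ m < k, x m < y m := by
  have hle (m : ℕ) : x m ≤ y m ↔ (x m = 1 → y m = 1) := by
    rcases hx m with h | h <;> rcases hy m with h' | h' <;> norm_num [h, h']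
  have hlt (m : ℕ) : x m < y m ↔ (y m = 1 ∧ ¬ x m = 1) := by
    rcases hx m with h | h <;> rcases hy m with h' | h' <;> norm_num [h, h']
  simp +contextual [ssubset_iff_subset_not_subset, subset_iff, onesBelow, hle, hlt]

lemma isWeakParetoMax_iff_forall_not_ssubset {Ω : Type*} {X : ℕ → ℕ → Ω → ℝ} {ω : Ω}
    (hval : ∀ i j, X i j ω = 0 ∨ X i j ω = 1) (k n i : ℕ) :
    IsWeakParetoMax X k n i ω ↔
      ∀ j < n, j ≠ i → ¬ onesBelow k (X i · ω) ⊂ onesBelow k (X j · ω) := by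
  simp only [IsWeakParetoMax, onesBelow_ssubset_iff (hval i) (hval _)]

section

variable {Ω : Type*} [MeasurableSpace Ω] {P : Measure Ω} {p : ℝ} {X : ℕ → ℕ → Ω → ℝ}

lemma measureReal_biInter_row_eq_prod (hindep : iIndepFun (fun q : ℕ × ℕ ↦ X q.1 q.2) P)
    (i : ℕ) (T : Finset ℕ) (v : ℕ → ℝ) :
    P.real (⋂ m ∈ T, {ω | X i m ω = v m}) = ∏ m ∈ T, P.real {ω | X i m ω = v m} := by
  have hrow : iIndepFun (X i) P := hindep.precomp (g := Prod.mk i) (Prod.mk_right_injective i)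
  simp only [measureReal_def, ← ENNReal.toReal_prod]
  congr 1
  exact hrow.measure_inter_preimage_eq_mul T (sets := fun m ↦ {v m}) fun _ _ ↦
    measurableSet_singleton _

structure IsBernoulliArray (P : Measure Ω) (p : ℝ) (X : ℕ → ℕ → Ω → ℝ) : Prop where
  measurable : ∀ i j, Measurable (X i j)
  indep : iIndepFun (fun q : ℕ × ℕ ↦ X q.1 q.2) P
  zero_or_one : ∀ i j ω, X i j ω = 0 ∨ X i j ω = 1
  measure_eq_one : ∀ i j, P {ω | X i j ω = 1} = ENNReal.ofReal p

namespace IsBernoulliArray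

lemma measurable_onesBelow_row (hX : IsBernoulliArray P p X) (k i : ℕ) :
    Measurable fun ω ↦ onesBelow k (X i · ω) :=
  (measurable_onesBelow k).comp (measurable_pi_lambda _ (hX.measurable i))

lemma measureReal_eq_one (hX : IsBernoulliArray P p X) (hp : 0 ≤ p) (i j : ℕ) :
    P.real {ω | X i j ω = 1} = p := by
  rw [measureReal_def, hX.measure_eq_one, ENNReal.toReal_ofReal hp]

lemma measureReal_eq_zero [IsProbabilityMeasure P] (hX : IsBernoulliArray P p X) (hp : 0 ≤ p)
    (i j : ℕ) : P.real {ω | X i j ω = 0} = 1 - p := by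
  have hcompl : {ω | X i j ω = 0} = {ω | X i j ω = 1}ᶜ := by
    ext ω
    rcases hX.zero_or_one i j ω with h | h <;> simp [h]
  have hone : MeasurableSet {ω | X i j ω = 1} := hX.measurable i j (measurableSet_singleton 1)
  rw [hcompl, measureReal_compl hone, hX.measureReal_eq_one hp, probReal_univ]

lemma measureReal_onesBelow_eq [IsProbabilityMeasure P] (hX : IsBernoulliArray P p X)
    (hp : 0 ≤ p) (i : ℕ) {k : ℕ} {t : Finset ℕ} (ht : t ⊆ range k) :
    P.real {ω | onesBelow k (X i · ω) = t} = p ^ #t * (1 - p) ^ (k - #t) := by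
  have hset : {ω | onesBelow k (X i · ω) = t}
      = ⋂ m ∈ range k, {ω | X i m ω = if m ∈ t then 1 else 0} := by
    ext ω
    simp only [Set.mem_ofPred_eq, Set.mem_iInter, Finset.ext_iff, onesBelow, mem_filter, mem_range]
    have hx := (hX.zero_or_one i · ω)
    have ht' : ∀ m ∈ t, m < k := fun m hm ↦ mem_range.mp (ht hm)
    grind
  rw [hset, measureReal_biInter_row_eq_prod hX.indep, ← prod_ite_mem_range ht]
  refine prod_congr rfl fun m _ ↦ ?_
  split_ifs
  exacts [hX.measureReal_eq_one hp i m, hX.measureReal_eq_zero hp i m]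

lemma measureReal_subset_onesBelow (hX : IsBernoulliArray P p X) (hp : 0 ≤ p) (i : ℕ) {k : ℕ}
    {s : Finset ℕ} (hs : s ⊆ range k) :
    P.real {ω | s ⊆ onesBelow k (X i · ω)} = p ^ #s := by
  have hset : {ω | s ⊆ onesBelow k (X i · ω)} = ⋂ m ∈ s, {ω | X i m ω = 1} := by
    ext ω
    simp only [Set.mem_ofPred_eq, Set.mem_iInter, subset_iff, onesBelow, mem_filter, mem_range]
    grind
  rw [hset, measureReal_biInter_row_eq_prod hX.indep i s (fun _ ↦ 1)]
  simp only [hX.measureReal_eq_one hp, prod_const]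

lemma measureReal_not_ssubset_onesBelow [IsProbabilityMeasure P] (hX : IsBernoulliArray P p X)
    (hp : 0 ≤ p) (i : ℕ) {k : ℕ} {s : Finset ℕ} (hs : s ⊆ range k) :
    P.real {ω | ¬ s ⊂ onesBelow k (X i · ω)} = 1 - p ^ #s + p ^ #s * (1 - p) ^ (k - #s) := by
  have hset : {ω | ¬ s ⊂ onesBelow k (X i · ω)}
      = ({ω | s ⊆ onesBelow k (X i · ω)} \ {ω | onesBelow k (X i · ω) = s})ᶜ := by
    ext ω
    simp [ssubset_iff_subset_ne, eq_comm]
  have hsub : {ω | onesBelow k (X i · ω) = s} ⊆ {ω | s ⊆ onesBelow k (X i · ω)} :=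
    fun ω h ↦ h.symm.subset
  have hsup : MeasurableSet {ω | s ⊆ onesBelow k (X i · ω)} :=
    hX.measurable_onesBelow_row k i (.of_discrete (s := {t | s ⊆ t}))
  have heq : MeasurableSet {ω | onesBelow k (X i · ω) = s} :=
    hX.measurable_onesBelow_row k i (measurableSet_singleton s)
  rw [hset, measureReal_compl (hsup.diff heq), measureReal_sdiff hsub heq, probReal_univ,
    hX.measureReal_subset_onesBelow hp i hs, hX.measureReal_onesBelow_eq hp i hs]
  ring

lemma measureReal_isWeakParetoMax_zero [IsProbabilityMeasure P] (hX : IsBernoulliArray P p X)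
    (hp : 0 ≤ p) (k n : ℕ) :
    P.real {ω | IsWeakParetoMax X k n 0 ω}
      = ∑ s ∈ (range k).powerset, p ^ #s * (1 - p) ^ (k - #s)
          * (1 - p ^ #s + p ^ #s * (1 - p) ^ (k - #s)) ^ (n - 1) := by
  set S : ℕ → Ω → Finset ℕ := fun j ω ↦ onesBelow k (X j · ω)
  have hS : iIndepFun S P :=
    (hX.indep.curry hX.measurable).comp _ fun _ ↦ measurable_onesBelow k
  rw [measureReal_eq_sum_preimage_singleton_inter (f := S 0) (range k).powerset
    (fun s _ ↦ hX.measurable_onesBelow_row k 0 (measurableSet_singleton s))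
    (fun ω ↦ mem_powerset.mpr (filter_subset _ _))]
  refine sum_congr rfl fun s hs ↦ ?_
  replace hs : s ⊆ range k := mem_powerset.mp hs
  let A (j : ℕ) : Set (Finset ℕ) := if j = 0 then {s} else {t | ¬ s ⊂ t}
  have hset : S 0 ⁻¹' {s} ∩ {ω | IsWeakParetoMax X k n 0 ω}
      = ⋂ j ∈ insert 0 (Ico 1 n), S j ⁻¹' A j := by
    ext ω
    simp only [Set.mem_inter_iff, Set.mem_preimage, Set.mem_singleton_iff, Set.mem_ofPred_eq,
      Set.mem_iInter, mem_insert, mem_Ico, forall_eq_or_imp,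
      isWeakParetoMax_iff_forall_not_ssubset (hX.zero_or_one · · ω)]
    rw [show S 0 ω ∈ A 0 ↔ S 0 ω = s by simp [A]]
    refine and_congr_right fun h0 ↦ forall_congr' fun j ↦ ?_
    rcases j.eq_zero_or_pos with rfl | hj
    · simp
    · simp [A, S, ← h0, hj.ne', Nat.one_le_iff_ne_zero]
  have hrow (j : ℕ) (hj : j ∈ Ico 1 n) :
      (P (S j ⁻¹' A j)).toReal = 1 - p ^ #s + p ^ #s * (1 - p) ^ (k - #s) := by
    simp only [A, if_neg (Nat.one_le_iff_ne_zero.mp (mem_Ico.mp hj).1)]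
    exact hX.measureReal_not_ssubset_onesBelow hp j hs
  rw [hset, measureReal_def, hS.measure_inter_preimage_eq_mul _ fun _ _ ↦ .of_discrete,
    ENNReal.toReal_prod, prod_insert (by simp), prod_congr rfl hrow, prod_const, Nat.card_Ico]
  exact congrArg (· * _) (hX.measureReal_onesBelow_eq hp 0 hs)

end IsBernoulliArray

end

theorem stmt_15_general {Ω : Type*} [MeasurableSpace Ω] (P : Measure Ω) [IsProbabilityMeasure P]
    (p : ℝ) (hp : p ∈ Set.Ioo (0 : ℝ) 1)
    (X : ℕ → ℕ → Ω → ℝ)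
    (hmeas : ∀ i j, Measurable (X i j))
    (hindep : iIndepFun (fun q : ℕ × ℕ => X q.1 q.2) P)
    (hval : ∀ i j ω, X i j ω = 0 ∨ X i j ω = 1)
    (hp1 : ∀ i j, P {ω | X i j ω = 1} = ENNReal.ofReal p)
    (k n : ℕ) :
    (P {ω | IsWeakParetoMax X k n 0 ω}).toReal
      = ∑ i ∈ Finset.range (k + 1),
          (k.choose i : ℝ) * p ^ i * (1 - p) ^ (k - i)
            * (1 - p ^ i + p ^ i * (1 - p) ^ (k - i)) ^ (n - 1) := by
  have hX : IsBernoulliArray P p X := ⟨hmeas, hindep, hval, hp1⟩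
  rw [← measureReal_def, hX.measureReal_isWeakParetoMax_zero hp.1.le,
    sum_powerset_apply_card (fun i ↦ p ^ i * (1 - p) ^ (k - i)
      * (1 - p ^ i + p ^ i * (1 - p) ^ (k - i)) ^ (n - 1)), card_range]
  simp only [nsmul_eq_mul, mul_assoc]

/-- for iid Bernoulli(p) coordinates, for all `k, n ≥ 1`,
`q_{k,n}^{(p)} = Σ_{i=0}^{k} C(k,i) pⁱ (1-p)^{k-i} (1 - pⁱ + pⁱ (1-p)^{k-i})^{n-1}`. -/
theorem stmt_15 {Ω : Type*} [MeasurableSpace Ω] (P : Measure Ω) [IsProbabilityMeasure P]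
    (p : ℝ) (hp : p ∈ Set.Ioo (0 : ℝ) 1)
    (X : ℕ → ℕ → Ω → ℝ)
    (hmeas : ∀ i j, Measurable (X i j))
    (hindep : iIndepFun (fun q : ℕ × ℕ => X q.1 q.2) P)
    (hval : ∀ i j ω, X i j ω = 0 ∨ X i j ω = 1)
    (hp1 : ∀ i j, P {ω | X i j ω = 1} = ENNReal.ofReal p)
    (k n : ℕ) (hk : 1 ≤ k) (hn : 1 ≤ n) :
    (P {ω | IsWeakParetoMax X k n 0 ω}).toReal
      = ∑ i ∈ Finset.range (k + 1),
          (k.choose i : ℝ) * p ^ i * (1 - p) ^ (k - i)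
            * (1 - p ^ i + p ^ i * (1 - p) ^ (k - i)) ^ (n - 1) :=
  stmt_15_general P p hp X hmeas hindep hval hp1 k n
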